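/- The number of pairs (σ₁, σ₂) of permutations in S_5 with σ₁σ₂ = (1,2,3,4,5), σ₂ a single 5-cycle, and σ₁ having exactly 1 cycle, equals 8. -/
import Mathlib


open Equiv Finset

/-- The set of cycles (orbits, including fixed points as singletons) of a permutation. -/
def cyclesOf {n : ℕ} (σ : Equiv.Perm (Fin n)) : Finset (Finset (Fin n)) :=
  Finset.univ.image fun x => Finset.univ.filter fun y => σ.SameCycle x y

/-- The number of cycles of a permutation, counting fixed points as cycles. -/
def cycleCount {n : ℕ} (σ : Equiv.Perm (Fin n)) : ℕ := (cyclesOf σ).card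

lemma cycleCount_eq_one_iff_sameCycle {n : ℕ} [NeZero n] (σ : Equiv.Perm (Fin n)) :
    cycleCount σ = 1 ↔ ∀ x y, σ.SameCycle x y := by
  constructor
  · intro h x y
    have hx : (Finset.univ.filter fun z => σ.SameCycle x z) ∈ cyclesOf σ :=
      Finset.mem_image_of_mem _ (Finset.mem_univ x)
    have hy : (Finset.univ.filter fun z => σ.SameCycle y z) ∈ cyclesOf σ :=
      Finset.mem_image_of_mem _ (Finset.mem_univ y)
    have heq := Finset.card_le_one.mp (le_of_eq h) _ hx _ hy
    have : y ∈ Finset.univ.filter fun z => σ.SameCycle y z := by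
      simp [Equiv.Perm.SameCycle.refl]
    rw [← heq] at this
    exact (Finset.mem_filter.mp this).2
  · intro h
    rw [cycleCount, Finset.card_eq_one]
    refine ⟨Finset.univ.filter fun z => σ.SameCycle 0 z, ?_⟩
    rw [Finset.eq_singleton_iff_unique_mem]
    constructor
    · exact Finset.mem_image_of_mem _ (Finset.mem_univ 0)
    · intro s hs
      obtain ⟨x, -, rfl⟩ := Finset.mem_image.mp hs
      ext y
      simp only [Finset.mem_filter, Finset.mem_univ, true_and]
      exact ⟨fun _ => h 0 y, fun _ => h x y⟩

lemma cycleCount_eq_one_iff (σ : Equiv.Perm (Fin 5)) :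
    cycleCount σ = 1 ↔ (σ ≠ 1 ∧ σ ^ 5 = 1) := by
  rw [cycleCount_eq_one_iff_sameCycle]
  constructor
  · intro h
    have hne : σ ≠ 1 := by
      intro h1
      have := h 0 1
      rw [h1] at this
      simp [Equiv.Perm.SameCycle] at this
    -- no fixed points
    have hfix : ∀ y : Fin 5, σ y ≠ y := by
      intro y hy
      obtain ⟨x, hx⟩ : ∃ x : Fin 5, x ≠ y := by
        rcases Decidable.em (y = 0) with rfl | h0
        · exact ⟨1, by decide⟩
        · exact ⟨0, fun h' => h0 h'.symm⟩
      obtain ⟨k, hk⟩ := h y x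
      rw [Equiv.Perm.zpow_apply_eq_self_of_apply_eq_self hy] at hk
      exact hx hk.symm
    -- σ is a cycle
    obtain ⟨x0, hx0⟩ : ∃ x : Fin 5, σ x ≠ x := ⟨0, hfix 0⟩
    have hcyc : σ.IsCycle := ⟨x0, hx0, fun y _ => h x0 y⟩
    have hsupp : σ.support = Finset.univ := by
      ext y; simp [Equiv.Perm.mem_support, hfix y]
    have horder : orderOf σ = 5 := by
      rw [hcyc.orderOf, hsupp]; simp
    refine ⟨hne, ?_⟩
    have := pow_orderOf_eq_one σ
    rwa [horder] at this
  · rintro ⟨hne, hpow⟩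
    have horder : orderOf σ = 5 := by
      have hdvd : orderOf σ ∣ 5 := orderOf_dvd_of_pow_eq_one hpow
      rcases (Nat.prime_five).eq_one_or_self_of_dvd _ hdvd with h | h
      · exact absurd (orderOf_eq_one_iff.mp h) hne
      · exact h
    have hcyc : σ.IsCycle := by
      apply Equiv.Perm.isCycle_of_prime_order' (by rw [horder]; norm_num)
      rw [horder]; simp
    have hsupp : σ.support = Finset.univ := by
      apply Finset.eq_univ_of_card
      have := hcyc.orderOf
      simp only [Fintype.card_fin]
      omega
    obtain ⟨x0, hx0, hall⟩ := hcyc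
    have key : ∀ y, σ.SameCycle x0 y := by
      intro y
      apply hall
      have : y ∈ σ.support := hsupp ▸ Finset.mem_univ y
      exact Equiv.Perm.mem_support.mp this
    intro x y
    exact (key x).symm.trans (key y)



set_option maxRecDepth 20000 in
/-- The number of pairs `(σ₁, σ₂)` of permutations of `{1,…,5}` with `σ₁σ₂ = (1,2,3,4,5)`,
`σ₂` a single 5-cycle, and `σ₁` having exactly one cycle, is `8`. -/
theorem count_pairs_S5_one_cycle :
    ((Finset.univ : Finset (Equiv.Perm (Fin 5) × Equiv.Perm (Fin 5))).filter fun p =>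
      p.1 * p.2 = finRotate 5 ∧ cycleCount p.2 = 1 ∧ cycleCount p.1 = 1).card = 8 := by
  have key : ((Finset.univ : Finset (Equiv.Perm (Fin 5))).filter fun σ =>
      (σ ≠ 1 ∧ σ^5 = 1) ∧ ((finRotate 5) * σ⁻¹ ≠ 1 ∧ ((finRotate 5) * σ⁻¹)^5 = 1)).card = 8 := by
    decide
  rw [← key]
  apply Finset.card_bij' (fun p _ => p.2) (fun σ _ => (finRotate 5 * σ⁻¹, σ))
  · intro p hp
    simp only [Finset.mem_filter, Finset.mem_univ, true_and] at hp ⊢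
    obtain ⟨hmul, h2, h1⟩ := hp
    have hp1 : p.1 = finRotate 5 * p.2⁻¹ := eq_mul_inv_iff_mul_eq.mpr hmul
    rw [← cycleCount_eq_one_iff, ← cycleCount_eq_one_iff, ← hp1]
    exact ⟨h2, h1⟩
  · intro σ hσ
    simp only [Finset.mem_filter, Finset.mem_univ, true_and] at hσ ⊢
    obtain ⟨h2, h1⟩ := hσ
    rw [← cycleCount_eq_one_iff] at h1 h2
    exact ⟨by group, h2, h1⟩
  · intro p hp
    simp only [Finset.mem_filter, Finset.mem_univ, true_and] at hp
    have hp1 : p.1 = finRotate 5 * p.2⁻¹ := eq_mul_inv_iff_mul_eq.mpr hp.1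
    exact Prod.ext hp1.symm rfl
  · intro σ hσ
    rfl
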